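/- If G is a graph with diameter 2, radius 2, and the triangle-property, and G is a minimal counterexample to having at least 2n−3 edges, then δ(G) ≥ 3. More concretely: in any graph G with diam(G) = rad(G) = 2 and the triangle-property, if some vertex has degree 2, then |E(G)| ≥ 2n − 3. -/

import Mathlib

/-!
Diameter two and the triangle property together say that any two distinct vertices have a
common neighbour; radius two says that no vertex is adjacent to all others.

Let `v` have neighbours `a` and `b`. Then `vab` is a triangle and every other vertex lies in
`S = farFinset v` and is adjacent to `a` or `b`; let `T = looseFinset v` be those adjacent to
only one of them. Splitting the degree sum along `S` and the triangle gives
`2|E| = 6 + 2 e(S, {a, b}) + ∑_{u ∈ S} d_S(u)` with `e(S, {a, b}) = 2|S| - |T|`, so it suffices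
that `∑_{u ∈ S} d_S(u) ≥ 2|T|`. Every vertex of `T` has a neighbour in `S`; call it pendant if
it has only one. If `x ∈ T`, adjacent to `a` say, has a pendant neighbour `u`, pick `y ∈ S`
adjacent to `b` but not to `a` (it exists as `a` is not dominating): the only common neighbour
`u` and `y` can have is `x`, so `x ~ y`, and a common neighbour `z` of `x` and `y` lies in `S`.
Then `y` and `z` are two non-pendant neighbours of `x` in `S`. So every vertex of `T` has two
non-pendant neighbours in `S` unless it is pendant itself, and `∑_{u ∈ S} d_S(u)` counts, besides
the edges to non-pendant vertices, one edge at each pendant vertex.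
-/

open Finset

lemma Finset.sum_add_ite_mem {α : Type*} [DecidableEq α] {s t : Finset α} (hts : t ⊆ s)
    (f : α → ℕ) : ∑ x ∈ s, (f x + if x ∈ t then 1 else 0) = ∑ x ∈ s, f x + #t := by
  rw [sum_add_distrib, sum_boole, filter_mem_eq_inter, inter_eq_right.2 hts, Nat.cast_id]

namespace SimpleGraph

def CommonNeighborProperty {V : Type*} (G : SimpleGraph V) : Prop :=
  ∀ x y, x ≠ y → ∃ z, G.Adj x z ∧ G.Adj y z

def NoDominatingVertex {V : Type*} (G : SimpleGraph V) : Prop :=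
  ∀ x, ∃ y, x ≠ y ∧ ¬ G.Adj x y

section Metric

variable {V : Type*} {G : SimpleGraph V} {x y : V}

lemma Connected.exists_adj_adj_of_dist_le_two (hconn : G.Connected) (hdist : G.dist x y ≤ 2)
    (hne : x ≠ y) (hadj : ¬ G.Adj x y) : ∃ z, G.Adj x z ∧ G.Adj y z := by
  by_contra! h
  have hempty : G.commonNeighbors x y = ∅ :=
    Set.eq_empty_of_forall_notMem fun z hz => h z hz.1 hz.2
  have hlt := two_lt_edist_iff.2 ⟨hne, hadj, hempty⟩
  rw [← (hconn x y).coe_dist_eq_edist] at hlt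
  exact absurd hdist (not_le.2 (by exact_mod_cast hlt))

lemma ne_and_not_adj_of_two_le_dist (h : 2 ≤ G.dist x y) : x ≠ y ∧ ¬ G.Adj x y := by
  refine ⟨?_, fun hadj => ?_⟩
  · rintro rfl
    simp at h
  · rw [dist_eq_one_iff_adj.2 hadj] at h
    omega

end Metric

section Counting

variable {V : Type*} [Fintype V] [DecidableEq V] (G : SimpleGraph V) [DecidableRel G.Adj]

lemma sum_card_neighborFinset_inter_comm (s t : Finset V) :
    ∑ u ∈ s, #(G.neighborFinset u ∩ t) = ∑ u ∈ t, #(G.neighborFinset u ∩ s) := by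
  convert sum_card_bipartiteAbove_eq_sum_card_bipartiteBelow (r := G.Adj) (s := s) (t := t)
    using 3 with u _ u _
  · ext w; simp [bipartiteAbove, and_comm]
  · ext w; simp [bipartiteBelow, and_comm, adj_comm]

lemma sum_degrees_eq_sum_card_neighborFinset_inter (s : Finset V) :
    ∑ u, G.degree u = ∑ u ∈ sᶜ, #(G.neighborFinset u ∩ sᶜ)
      + 2 * ∑ u ∈ sᶜ, #(G.neighborFinset u ∩ s) + ∑ u ∈ s, #(G.neighborFinset u ∩ s) := by
  have hsplit (u : V) : G.degree u = #(G.neighborFinset u ∩ s) + #(G.neighborFinset u ∩ sᶜ) := by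
    rw [← card_neighborFinset_eq_degree, ← sdiff_eq_inter_compl, card_inter_add_card_sdiff]
  rw [← sum_add_sum_compl s, sum_congr rfl fun u _ => hsplit u, sum_congr rfl fun u _ => hsplit u,
    sum_add_distrib, sum_add_distrib, G.sum_card_neighborFinset_inter_comm s sᶜ]
  ring

lemma IsClique.sum_card_neighborFinset_inter {G : SimpleGraph V} [DecidableRel G.Adj]
    {s : Finset V} (hs : G.IsClique (s : Set V)) :
    ∑ u ∈ s, #(G.neighborFinset u ∩ s) = #s * (#s - 1) := by
  have herase (u : V) (hu : u ∈ s) : G.neighborFinset u ∩ s = s.erase u := by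
    ext w
    simp only [mem_inter, mem_neighborFinset, mem_erase]
    exact ⟨fun h => ⟨(G.ne_of_adj h.1).symm, h.2⟩,
      fun h => ⟨hs (mem_coe.2 hu) (mem_coe.2 h.2) h.1.symm, h.2⟩⟩
  rw [sum_congr rfl fun u hu => by rw [herase u hu, card_erase_of_mem hu], sum_const, smul_eq_mul]

end Counting

section DegreeTwo

variable {V : Type*} [Fintype V] [DecidableEq V] (G : SimpleGraph V) [DecidableRel G.Adj]

def farFinset (v : V) : Finset V := (insert v (G.neighborFinset v))ᶜ

def looseFinset (v : V) : Finset V :=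
  {u ∈ G.farFinset v | ¬ G.neighborFinset v ⊆ G.neighborFinset u}

def pendantFinset (v : V) : Finset V :=
  {u ∈ G.looseFinset v | #(G.neighborFinset u ∩ G.farFinset v) = 1}

variable {G} {v a b u x y z : V}

@[simp] lemma mem_farFinset : u ∈ G.farFinset v ↔ u ≠ v ∧ ¬ G.Adj v u := by
  simp [farFinset]

lemma looseFinset_subset_farFinset : G.looseFinset v ⊆ G.farFinset v := filter_subset _ _

lemma pendantFinset_subset_looseFinset : G.pendantFinset v ⊆ G.looseFinset v := filter_subset _ _

lemma adj_iff_of_neighborFinset_eq (hv : G.neighborFinset v = {a, b}) (u : V) :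
    G.Adj v u ↔ u = a ∨ u = b := by
  rw [← mem_neighborFinset, hv, mem_insert, mem_singleton]

lemma mem_looseFinset_iff (hv : G.neighborFinset v = {a, b}) :
    x ∈ G.looseFinset v ↔ x ∈ G.farFinset v ∧ ¬ (G.Adj a x ∧ G.Adj b x) := by
  simp [looseFinset, hv, insert_subset_iff, adj_comm G x]

lemma mem_farFinset_of_adj (hv : G.neighborFinset v = {a, b}) (hu : u ∈ G.farFinset v)
    (huz : G.Adj u z) (hza : z ≠ a) (hzb : z ≠ b) : z ∈ G.farFinset v := by
  rw [mem_farFinset] at hu ⊢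
  refine ⟨?_, fun hvz => ?_⟩
  · rintro rfl
    exact hu.2 huz.symm
  · rcases (adj_iff_of_neighborFinset_eq hv _).1 hvz with rfl | rfl <;> contradiction

lemma eq_of_mem_pendantFinset (hu : u ∈ G.pendantFinset v) (hy : y ∈ G.farFinset v)
    (hz : z ∈ G.farFinset v) (huy : G.Adj u y) (huz : G.Adj u z) : y = z := by
  have hone := (mem_filter.1 hu).2
  exact card_le_one.1 hone.le y (by simp [huy, hy]) z (by simp [huz, hz])

lemma adj_of_neighborFinset_eq (hG : G.CommonNeighborProperty)
    (hv : G.neighborFinset v = {a, b}) : G.Adj a b := by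
  have hva : G.Adj v a := (adj_iff_of_neighborFinset_eq hv _).2 (Or.inl rfl)
  obtain ⟨z, hvz, haz⟩ := hG v a hva.ne
  rcases (adj_iff_of_neighborFinset_eq hv _).1 hvz with rfl | rfl
  · exact absurd haz G.irrefl
  · exact haz

lemma exists_mem_farFinset_adj_not_adj (hG : G.CommonNeighborProperty)
    (hdom : G.NoDominatingVertex) (hv : G.neighborFinset v = {a, b}) :
    ∃ y ∈ G.farFinset v, G.Adj b y ∧ ¬ G.Adj a y := by
  have hadj := adj_iff_of_neighborFinset_eq hv
  have hab := adj_of_neighborFinset_eq hG hv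
  obtain ⟨y, hay, hnay⟩ := hdom a
  have hyv : y ≠ v := by
    rintro rfl
    exact hnay ((hadj a).2 (Or.inl rfl)).symm
  have hvy : ¬ G.Adj v y := by
    intro h
    rcases (hadj y).1 h with rfl | rfl
    exacts [hay rfl, hnay hab]
  obtain ⟨c, hvc, hyc⟩ := hG v y (Ne.symm hyv)
  rcases (hadj c).1 hvc with rfl | rfl
  · exact absurd hyc.symm hnay
  · exact ⟨y, mem_farFinset.2 ⟨hyv, hvy⟩, hyc.symm, hnay⟩

lemma exists_pair_of_mem_looseFinset (hG : G.CommonNeighborProperty) (hv : G.degree v = 2)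
    (hx : x ∈ G.looseFinset v) :
    ∃ a b, G.neighborFinset v = {a, b} ∧ G.Adj a x ∧ ¬ G.Adj b x := by
  obtain ⟨a, b, -, hvab⟩ := card_eq_two.1 ((G.card_neighborFinset_eq_degree v).trans hv)
  rw [mem_looseFinset_iff hvab, mem_farFinset] at hx
  obtain ⟨⟨hxv, -⟩, hnot⟩ := hx
  obtain ⟨c, hvc, hxc⟩ := hG v x (Ne.symm hxv)
  rcases (adj_iff_of_neighborFinset_eq hvab _).1 hvc with rfl | rfl
  · exact ⟨c, b, hvab, hxc.symm, fun hbx => hnot ⟨hxc.symm, hbx⟩⟩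
  · exact ⟨c, a, hvab.trans (pair_comm a c), hxc.symm, fun hax => hnot ⟨hax, hxc.symm⟩⟩

lemma nonempty_neighborFinset_inter_farFinset (hG : G.CommonNeighborProperty)
    (hv : G.degree v = 2) (hx : x ∈ G.looseFinset v) :
    (G.neighborFinset x ∩ G.farFinset v).Nonempty := by
  obtain ⟨a, b, hvab, hax, hbx⟩ := exists_pair_of_mem_looseFinset hG hv hx
  have hxS := looseFinset_subset_farFinset hx
  obtain ⟨z, hxz, haz⟩ := hG x a hax.ne.symm
  refine ⟨z, mem_inter.2 ⟨(mem_neighborFinset _ _ _).2 hxz, ?_⟩⟩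
  refine mem_farFinset_of_adj hvab hxS hxz ?_ ?_
  · rintro rfl
    exact G.irrefl haz
  · rintro rfl
    exact hbx hxz.symm

lemma not_adj_of_mem_pendantFinset (hG : G.CommonNeighborProperty)
    (hv : G.neighborFinset v = {a, b}) (hu : u ∈ G.pendantFinset v) (hx : x ∈ G.farFinset v)
    (hux : G.Adj u x) (hbx : ¬ G.Adj b x) : ¬ G.Adj b u := by
  intro hbu
  have huT := pendantFinset_subset_looseFinset hu
  have hau : ¬ G.Adj a u := fun hau => ((mem_looseFinset_iff hv).1 huT).2 ⟨hau, hbu⟩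
  obtain ⟨z, huz, hbz⟩ := hG u b hbu.ne.symm
  have hzS : z ∈ G.farFinset v := by
    refine mem_farFinset_of_adj hv (looseFinset_subset_farFinset huT) huz ?_ ?_
    · rintro rfl
      exact hau huz.symm
    · rintro rfl
      exact G.irrefl hbz
  obtain rfl := eq_of_mem_pendantFinset hu hzS hx huz hux
  exact hbx hbz

lemma two_le_card_sdiff_pendantFinset_of_adj (hG : G.CommonNeighborProperty)
    (hdom : G.NoDominatingVertex) (hv : G.degree v = 2) (hx : x ∈ G.looseFinset v)
    (hu : u ∈ G.pendantFinset v) (hxu : G.Adj x u) :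
    2 ≤ #((G.neighborFinset x ∩ G.farFinset v) \ G.pendantFinset v) := by
  obtain ⟨a, b, hvab, hax, hbx⟩ := exists_pair_of_mem_looseFinset hG hv hx
  have hxS := looseFinset_subset_farFinset hx
  have huS := looseFinset_subset_farFinset (pendantFinset_subset_looseFinset hu)
  have hbu := not_adj_of_mem_pendantFinset hG hvab hu hxS hxu.symm hbx
  obtain ⟨y, hyS, hby, hay⟩ := exists_mem_farFinset_adj_not_adj hG hdom hvab
  -- `x` is the only neighbour of `u` in `farFinset v`, hence a common neighbour of `u` and `y`
  have hxy : G.Adj x y := by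
    obtain ⟨z, huz, hyz⟩ := hG u y (by rintro rfl; exact hbu hby)
    have hzS : z ∈ G.farFinset v := by
      refine mem_farFinset_of_adj hvab huS huz ?_ ?_
      · rintro rfl; exact hay hyz.symm
      · rintro rfl; exact hbu huz.symm
    obtain rfl := eq_of_mem_pendantFinset hu hzS hxS huz hxu.symm
    exact hyz.symm
  obtain ⟨z, hxz, hyz⟩ := hG x y hxy.ne
  have hzS : z ∈ G.farFinset v := by
    refine mem_farFinset_of_adj hvab hxS hxz ?_ ?_
    · rintro rfl; exact hay hyz.symm
    · rintro rfl; exact hbx hxz.symm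
  -- `x`, `y`, `z` is a triangle in `farFinset v`, so neither `y` nor `z` is pendant
  have hyP : y ∉ G.pendantFinset v := fun hyP =>
    hxz.ne (eq_of_mem_pendantFinset hyP hxS hzS hxy.symm hyz)
  have hzP : z ∉ G.pendantFinset v := fun hzP =>
    hxy.ne (eq_of_mem_pendantFinset hzP hxS hyS hxz.symm hyz.symm)
  refine one_lt_card.2 ⟨y, ?_, z, ?_, hyz.ne⟩ <;> simp [*]

lemma two_le_card_sdiff_pendantFinset_add_ite (hG : G.CommonNeighborProperty)
    (hdom : G.NoDominatingVertex) (hv : G.degree v = 2) (hx : x ∈ G.looseFinset v) :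
    2 ≤ #((G.neighborFinset x ∩ G.farFinset v) \ G.pendantFinset v)
      + if x ∈ G.pendantFinset v then 1 else 0 := by
  by_cases hxP : ∃ u ∈ G.pendantFinset v, G.Adj x u
  · obtain ⟨u, hu, hxu⟩ := hxP
    exact (two_le_card_sdiff_pendantFinset_of_adj hG hdom hv hx hu hxu).trans (Nat.le_add_right _ _)
  · have hdisj : (G.neighborFinset x ∩ G.farFinset v) \ G.pendantFinset v
        = G.neighborFinset x ∩ G.farFinset v := by
      refine sdiff_eq_self_of_disjoint (Finset.disjoint_left.2 fun u hu huP => hxP ⟨u, huP, ?_⟩)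
      exact (mem_neighborFinset _ _ _).1 (mem_inter.1 hu).1
    have hpos := card_pos.2 (nonempty_neighborFinset_inter_farFinset hG hv hx)
    rw [hdisj]
    split_ifs with hxP'
    · omega
    · have : #(G.neighborFinset x ∩ G.farFinset v) ≠ 1 := fun h => hxP' (mem_filter.2 ⟨hx, h⟩)
      omega

theorem two_mul_card_looseFinset_le (hG : G.CommonNeighborProperty)
    (hdom : G.NoDominatingVertex) (hv : G.degree v = 2) :
    2 * #(G.looseFinset v) ≤ ∑ x ∈ G.farFinset v, #(G.neighborFinset x ∩ G.farFinset v) := by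
  set S := G.farFinset v
  set P := G.pendantFinset v
  have hPS : P ⊆ S := pendantFinset_subset_looseFinset.trans looseFinset_subset_farFinset
  have hsplit : ∑ x ∈ S, #(G.neighborFinset x ∩ S)
      = ∑ x ∈ S, #((G.neighborFinset x ∩ S) \ P) + #P := by
    have hP : ∑ x ∈ S, #(G.neighborFinset x ∩ P) = #P := by
      rw [sum_card_neighborFinset_inter_comm,
        sum_const_nat (s := P) fun u hu => (mem_filter.1 hu).2, mul_one]
    rw [← hP, ← sum_add_distrib]
    refine sum_congr rfl fun x _ => ?_
    rw [← card_sdiff_add_card_inter (G.neighborFinset x ∩ S) P, inter_assoc, inter_eq_right.2 hPS]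
  calc 2 * #(G.looseFinset v)
      ≤ ∑ x ∈ G.looseFinset v, (#((G.neighborFinset x ∩ S) \ P) + if x ∈ P then 1 else 0) := by
        rw [mul_comm, ← smul_eq_mul, ← sum_const]
        exact sum_le_sum fun x hx => two_le_card_sdiff_pendantFinset_add_ite hG hdom hv hx
    _ = ∑ x ∈ G.looseFinset v, #((G.neighborFinset x ∩ S) \ P) + #P :=
        sum_add_ite_mem pendantFinset_subset_looseFinset _
    _ ≤ ∑ x ∈ S, #((G.neighborFinset x ∩ S) \ P) + #P := by
        gcongr
        exact looseFinset_subset_farFinset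
    _ = ∑ x ∈ S, #(G.neighborFinset x ∩ S) := hsplit.symm

lemma two_mul_card_farFinset_le (hG : G.CommonNeighborProperty) (hv : G.degree v = 2) :
    2 * #(G.farFinset v)
      ≤ ∑ u ∈ G.farFinset v, #(G.neighborFinset u ∩ insert v (G.neighborFinset v))
        + #(G.looseFinset v) := by
  have hvertex (u : V) (hu : u ∈ G.farFinset v) :
      2 ≤ #(G.neighborFinset u ∩ insert v (G.neighborFinset v))
        + if u ∈ G.looseFinset v then 1 else 0 := by
    split_ifs with huT
    · obtain ⟨c, hvc, huc⟩ := hG v u (mem_farFinset.1 hu).1.symm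
      have hc : c ∈ G.neighborFinset u ∩ insert v (G.neighborFinset v) := by
        simp [huc, hvc]
      have := card_pos.2 ⟨c, hc⟩
      omega
    · have hsub : G.neighborFinset v ⊆ G.neighborFinset u ∩ insert v (G.neighborFinset v) :=
        subset_inter (not_not.1 fun h => huT (mem_filter.2 ⟨hu, h⟩)) (subset_insert _ _)
      have := card_le_card hsub
      rw [card_neighborFinset_eq_degree, hv] at this
      omega
  calc 2 * #(G.farFinset v)
      ≤ ∑ u ∈ G.farFinset v, (#(G.neighborFinset u ∩ insert v (G.neighborFinset v))
          + if u ∈ G.looseFinset v then 1 else 0) := by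
        rw [mul_comm, ← smul_eq_mul, ← sum_const]
        exact sum_le_sum hvertex
    _ = _ := sum_add_ite_mem looseFinset_subset_farFinset _

theorem two_mul_card_le_card_edgeFinset_add_three (hG : G.CommonNeighborProperty)
    (hdom : G.NoDominatingVertex) (hv : G.degree v = 2) :
    2 * Fintype.card V ≤ #G.edgeFinset + 3 := by
  obtain ⟨a, b, -, hvab⟩ := card_eq_two.1 ((G.card_neighborFinset_eq_degree v).trans hv)
  have hadj := adj_iff_of_neighborFinset_eq hvab
  have hK : G.IsNClique 3 (insert v (G.neighborFinset v)) := by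
    rw [hvab, is3Clique_triple_iff]
    exact ⟨(hadj a).2 (Or.inl rfl), (hadj b).2 (Or.inr rfl), adj_of_neighborFinset_eq hG hvab⟩
  have hdegrees := G.sum_degrees_eq_sum_card_neighborFinset_inter (insert v (G.neighborFinset v))
  rw [sum_degrees_eq_twice_card_edges, hK.isClique.sum_card_neighborFinset_inter, hK.card_eq]
    at hdegrees
  have hcard := card_add_card_compl (insert v (G.neighborFinset v))
  rw [hK.card_eq] at hcard
  have hcore := two_mul_card_looseFinset_le hG hdom hv
  have hattached := two_mul_card_farFinset_le hG hv
  unfold farFinset at hcore hattached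
  omega

end DegreeTwo

end SimpleGraph

/-- In any graph `G` with `diam(G) = rad(G) = 2` and the triangle-property, if
some vertex has degree `2`, then `|E(G)| ≥ 2n - 3`. -/
theorem stmt13 (n : ℕ) (G : SimpleGraph (Fin n)) [DecidableRel G.Adj]
    (hconn : G.Connected)
    (hdiam : ∀ u v : Fin n, G.dist u v ≤ 2)
    (hrad : ∀ v : Fin n, ∃ u : Fin n, 2 ≤ G.dist v u)
    (htri : ∀ u v : Fin n, G.Adj u v → ∃ w : Fin n, G.Adj u w ∧ G.Adj v w)
    (hdeg2 : ∃ v : Fin n, G.degree v = 2) :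
    2 * n - 3 ≤ G.edgeFinset.card := by
  have hG : G.CommonNeighborProperty := fun x y hne => by
    by_cases hadj : G.Adj x y
    · exact htri x y hadj
    · exact hconn.exists_adj_adj_of_dist_le_two (hdiam x y) hne hadj
  have hdom : G.NoDominatingVertex := fun x => by
    obtain ⟨y, hy⟩ := hrad x
    exact ⟨y, SimpleGraph.ne_and_not_adj_of_two_le_dist hy⟩
  obtain ⟨v, hv⟩ := hdeg2
  have := SimpleGraph.two_mul_card_le_card_edgeFinset_add_three hG hdom hv
  rw [Fintype.card_fin] at this
  omega
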